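/- arXiv:1405.2955 — 5 statements merged into one kernel-verified Lean document; each statement's English description precedes it below -/
import Mathlib

section
/- Let U ⊆ ℝ be an open set with 0 ∉ U and let h : ℝ → ℝ be infinitely differentiable on an open set containing U. For every positive integer n and every s ∈ U, the second derivative of the n-fold iterate Dⁿh satisfies (Dⁿ h)''(s) = Dⁿ(h'')(s) - 2n·(D^{n+1} h)(s). -/
noncomputable section
open scoped BigOperators

/-- The negative definite quadratic form `v ↦ -‖v‖²` on `ℝ^m`. -/
def Qf (m : ℕ) : QuadraticForm ℝ (Fin m → ℝ) :=
  QuadraticMap.weightedSumSquares ℝ (fun _ : Fin m => (-1 : ℝ))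

/-- The real Clifford algebra `R_{0,m}`. -/
abbrev Cl (m : ℕ) := CliffordAlgebra (Qf m)

/-- Canonical embedding of vectors. -/
def clv {m : ℕ} (x : Fin m → ℝ) : Cl m := CliffordAlgebra.ι (Qf m) x

/-- The generators `e_j`. -/
def gen (m : ℕ) (j : Fin m) : Cl m := clv (Pi.single j 1)

/-- The basis elements `e_A` (ordered products of generators). -/
def eProd (m : ℕ) (A : Finset (Fin m)) : Cl m :=
  ((A.sort (· ≤ ·)).map (gen m)).prod

/-- Euclidean norm on `Fin n → ℝ`. -/
def rnorm {n : ℕ} (y : Fin n → ℝ) : ℝ := Real.sqrt (∑ j, y j ^ 2)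

/-- Partial derivative of a scalar function on `ℝ^n`. -/
def pd {n : ℕ} (j : Fin n) (g : (Fin n → ℝ) → ℝ) : (Fin n → ℝ) → ℝ :=
  fun x => deriv (fun s => g (Function.update x j s)) (x j)

/-- Componentwise partial derivative of a Clifford-valued function. -/
def pdC {n m : ℕ} (b : Module.Basis (Finset (Fin m)) ℝ (Cl m)) (j : Fin n)
    (f : (Fin n → ℝ) → Cl m) : (Fin n → ℝ) → Cl m :=
  fun x => ∑ A : Finset (Fin m), pd j (fun w => (b.repr (f w)) A) x • b A

/-- `P` has all components (w.r.t. basis `b`) homogeneous polynomials of degree `deg`. -/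
def IsHomPoly {n m : ℕ} (b : Module.Basis (Finset (Fin m)) ℝ (Cl m)) (deg : ℕ)
    (P : (Fin n → ℝ) → Cl m) : Prop :=
  ∀ A, ∃ Q : MvPolynomial (Fin n) ℝ, Q.IsHomogeneous deg ∧
    ∀ w, MvPolynomial.eval w Q = (b.repr (P w)) A

/-- The operator `x⁻¹ ∂_x`. -/
def Dop (h : ℝ → ℝ) : ℝ → ℝ := fun s => s⁻¹ * deriv h s

/-- The operator `∂_x x⁻¹`. -/
def Eop (h : ℝ → ℝ) : ℝ → ℝ := fun s => deriv (fun u => u⁻¹ * h u) s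

/-- Partial derivative w.r.t. the first variable of a function on `ℝ²`. -/
def pda (u : ℝ × ℝ → ℝ) : ℝ × ℝ → ℝ := fun w => deriv (fun s => u (s, w.2)) w.1

/-- Partial derivative w.r.t. the second variable of a function on `ℝ²`. -/
def pdb (u : ℝ × ℝ → ℝ) : ℝ × ℝ → ℝ := fun w => deriv (fun s => u (w.1, s)) w.2

/-- The upper half-plane. -/
def UHP : Set (ℝ × ℝ) := {w | 0 < w.2}

section biaxial
variable {p q : ℕ}

/-- biaxial domain `ℝ^p ⊕ ℝ^q` -/
abbrev Zb (p q : ℕ) := (Fin p → ℝ) × (Fin q → ℝ)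

def pdx (j : Fin p) (g : Zb p q → ℝ) : Zb p q → ℝ :=
  fun z => deriv (fun s => g (Function.update z.1 j s, z.2)) (z.1 j)

def pdy (j : Fin q) (g : Zb p q → ℝ) : Zb p q → ℝ :=
  fun z => deriv (fun s => g (z.1, Function.update z.2 j s)) (z.2 j)

def pdxC (b : Module.Basis (Finset (Fin (p+q))) ℝ (Cl (p+q))) (j : Fin p)
    (f : Zb p q → Cl (p+q)) : Zb p q → Cl (p+q) :=
  fun z => ∑ A : Finset (Fin (p+q)), pdx j (fun w => (b.repr (f w)) A) z • b A

def pdyC (b : Module.Basis (Finset (Fin (p+q))) ℝ (Cl (p+q))) (j : Fin q)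
    (f : Zb p q → Cl (p+q)) : Zb p q → Cl (p+q) :=
  fun z => ∑ A : Finset (Fin (p+q)), pdy j (fun w => (b.repr (f w)) A) z • b A

/-- embedding `ℝ^p → ℝ^{p+q}` -/
def embX (x : Fin p → ℝ) : Fin (p+q) → ℝ := Fin.append x 0

/-- embedding `ℝ^q → ℝ^{p+q}` -/
def embY (y : Fin q → ℝ) : Fin (p+q) → ℝ := Fin.append 0 y

/-- The Dirac operator `∂_x` in the first group of variables. -/
def diracX (b : Module.Basis (Finset (Fin (p+q))) ℝ (Cl (p+q))) (f : Zb p q → Cl (p+q)) :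
    Zb p q → Cl (p+q) :=
  fun z => ∑ j : Fin p, gen (p+q) (Fin.castAdd q j) * pdxC b j f z

/-- The Dirac operator `∂_y` in the second group of variables. -/
def diracY (b : Module.Basis (Finset (Fin (p+q))) ℝ (Cl (p+q))) (f : Zb p q → Cl (p+q)) :
    Zb p q → Cl (p+q) :=
  fun z => ∑ j : Fin q, gen (p+q) (Fin.natAdd p j) * pdyC b j f z

/-- The operator `⟨t,∂_x⟩`. -/
def dirT (t : Fin p → ℝ) (b : Module.Basis (Finset (Fin (p+q))) ℝ (Cl (p+q)))
    (f : Zb p q → Cl (p+q)) : Zb p q → Cl (p+q) :=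
  fun z => ∑ j : Fin p, t j • pdxC b j f z

/-- The Laplacian `Δ_x`. -/
def lapX (b : Module.Basis (Finset (Fin (p+q))) ℝ (Cl (p+q))) (f : Zb p q → Cl (p+q)) :
    Zb p q → Cl (p+q) :=
  fun z => ∑ j : Fin p, pdxC b j (pdxC b j f) z

/-- The Laplacian `Δ_y`. -/
def lapY (b : Module.Basis (Finset (Fin (p+q))) ℝ (Cl (p+q))) (f : Zb p q → Cl (p+q)) :
    Zb p q → Cl (p+q) :=
  fun z => ∑ j : Fin q, pdyC b j (pdyC b j f) z

/-- `P : ℝ^q → Cl_{p+q}` is monogenic w.r.t. `∂_y`. -/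
def MonoY (b : Module.Basis (Finset (Fin (p+q))) ℝ (Cl (p+q))) (P : (Fin q → ℝ) → Cl (p+q)) : Prop :=
  ∀ y, ∑ j : Fin q, gen (p+q) (Fin.natAdd p j) * pdC b j P y = 0

/-- `P : ℝ^p → Cl_{p+q}` is monogenic w.r.t. `∂_x`. -/
def MonoX (b : Module.Basis (Finset (Fin (p+q))) ℝ (Cl (p+q))) (P : (Fin p → ℝ) → Cl (p+q)) : Prop :=
  ∀ x, ∑ j : Fin p, gen (p+q) (Fin.castAdd q j) * pdC b j P x = 0

/-- The even subalgebra generated by `e_1,…,e_p`, as a submodule. -/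
def evenX (p q : ℕ) : Submodule ℝ (Cl (p+q)) :=
  Submodule.span ℝ {a | ∃ l : List (Fin p), Even l.length ∧
    a = (l.map (fun j => gen (p+q) (Fin.castAdd q j))).prod}

/-- The even subalgebra generated by `e_{p+1},…,e_{p+q}`, as a submodule. -/
def evenY (p q : ℕ) : Submodule ℝ (Cl (p+q)) :=
  Submodule.span ℝ {a | ∃ l : List (Fin q), Even l.length ∧
    a = (l.map (fun j => gen (p+q) (Fin.natAdd p j))).prod}

end biaxial

/-- Gegenbauer polynomials `C_k^λ`. -/
def gegen (lam : ℝ) : ℕ → ℝ → ℝ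
  | 0, _ => 1
  | 1, t => 2 * lam * t
  | (k+2), t => ((k : ℝ) + 2)⁻¹ *
      (2 * (((k : ℝ) + 2) + lam - 1) * t * gegen lam (k+1) t -
        (((k : ℝ) + 2) + 2 * lam - 2) * gegen lam k t)

section axial
variable {m : ℕ}

/-- `∂_{x₀}` on `ℝ × ℝ^m`. -/
def pd0 (g : ℝ × (Fin m → ℝ) → ℝ) : ℝ × (Fin m → ℝ) → ℝ :=
  fun z => deriv (fun s => g (s, z.2)) z.1

/-- `∂_{x_j}` on `ℝ × ℝ^m`. -/
def pdX (j : Fin m) (g : ℝ × (Fin m → ℝ) → ℝ) : ℝ × (Fin m → ℝ) → ℝ :=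
  fun z => deriv (fun s => g (z.1, Function.update z.2 j s)) (z.2 j)

/-- componentwise `∂_{x₀}` for Clifford-valued functions. -/
def pd0C (b : Module.Basis (Finset (Fin m)) ℝ (Cl m)) (f : ℝ × (Fin m → ℝ) → Cl m) :
    ℝ × (Fin m → ℝ) → Cl m :=
  fun z => ∑ A : Finset (Fin m), pd0 (fun w => (b.repr (f w)) A) z • b A

/-- componentwise `∂_{x_j}` for Clifford-valued functions. -/
def pdXC (b : Module.Basis (Finset (Fin m)) ℝ (Cl m)) (j : Fin m) (f : ℝ × (Fin m → ℝ) → Cl m) :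
    ℝ × (Fin m → ℝ) → Cl m :=
  fun z => ∑ A : Finset (Fin m), pdX j (fun w => (b.repr (f w)) A) z • b A

/-- The full Laplacian `∂_{x₀}² + Δ_X` on `ℝ^{m+1}`, componentwise. -/
def lapFull (b : Module.Basis (Finset (Fin m)) ℝ (Cl m)) (f : ℝ × (Fin m → ℝ) → Cl m) :
    ℝ × (Fin m → ℝ) → Cl m :=
  fun z => pd0C b (pd0C b f) z + ∑ j : Fin m, pdXC b j (pdXC b j f) z

end axial

section ops
variable {p q : ℕ}

/-- The operator `⟨t,∂_x⟩² + Δ_y`. -/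
def Lwave (t : Fin p → ℝ) (b : Module.Basis (Finset (Fin (p+q))) ℝ (Cl (p+q)))
    (f : Zb p q → Cl (p+q)) : Zb p q → Cl (p+q) :=
  fun z => dirT t b (dirT t b f) z + lapY b f z

/-- The operator `Δ_x + Δ_y`. -/
def lapXY (b : Module.Basis (Finset (Fin (p+q))) ℝ (Cl (p+q)))
    (f : Zb p q → Cl (p+q)) : Zb p q → Cl (p+q) :=
  fun z => lapX b f z + lapY b f z

end ops
end


section aux
private lemma lemB_aux {W : Set ℝ} (hW : IsOpen W) (h0 : (0:ℝ) ∉ W) {f : ℝ → ℝ}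
    (hf : ContDiffOn ℝ (⊤ : ℕ∞) f W) {s : ℝ} (hs : s ∈ W) :
    deriv (deriv (Dop f)) s = Dop (deriv (deriv f)) s - 2 * Dop (Dop f) s := by
  have hne : ∀ u ∈ W, u ≠ 0 := fun u hu h => h0 (h ▸ hu)
  have hf1 : ContDiffOn ℝ (⊤ : ℕ∞) (deriv f) W := hf.deriv_of_isOpen hW (by simp)
  have hf2 : ContDiffOn ℝ (⊤ : ℕ∞) (deriv (deriv f)) W := hf1.deriv_of_isOpen hW (by simp)
  have hd : ∀ (g : ℝ → ℝ), ContDiffOn ℝ (⊤ : ℕ∞) g W → ∀ u ∈ W, HasDerivAt g (deriv g u) u :=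
    fun g hg u hu => ((hg.differentiableOn (by simp)).differentiableAt (hW.mem_nhds hu)).hasDerivAt
  have hD : ∀ u ∈ W, deriv (Dop f) u = -(u^2)⁻¹ * deriv f u + u⁻¹ * deriv (deriv f) u := by
    intro u hu
    have := ((hasDerivAt_inv (hne u hu)).mul (hd _ hf1 u hu)).deriv
    rw [show Dop f = (fun y:ℝ => y⁻¹) * deriv f from rfl]
    simpa [Dop] using this
  have hEq : deriv (Dop f) =ᶠ[nhds s] fun u => -(u^2)⁻¹ * deriv f u + u⁻¹ * deriv (deriv f) u :=
    Filter.eventuallyEq_of_mem (hW.mem_nhds hs) hD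
  rw [hEq.deriv_eq]
  have h1 : HasDerivAt (fun u:ℝ => -(u^2)⁻¹ * deriv f u + u⁻¹ * deriv (deriv f) u)
      ( (-(-(2*s^1)/((s^2)^2))) * deriv f s + (-(s^2)⁻¹) * deriv (deriv f) s
        + ((-(s^2)⁻¹) * deriv (deriv f) s + s⁻¹ * deriv (deriv (deriv f)) s) ) s :=
    ((((hasDerivAt_pow 2 s).inv (pow_ne_zero 2 (hne s hs))).neg.mul (hd _ hf1 s hs)).add
      ((hasDerivAt_inv (hne s hs)).mul (hd _ hf2 s hs)))
  rw [h1.deriv, Dop, Dop, hD s hs]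
  have hs0 := hne s hs
  field_simp
  ring

private lemma smoothDop_aux {W : Set ℝ} (hW : IsOpen W) (h0 : (0:ℝ) ∉ W) {f : ℝ → ℝ}
    (hf : ContDiffOn ℝ (⊤ : ℕ∞) f W) : ContDiffOn ℝ (⊤ : ℕ∞) (Dop f) W :=
  (contDiffOn_id.inv (fun x hx => fun h => h0 (h ▸ hx))).mul (hf.deriv_of_isOpen hW (by simp))
end aux

/-- `(Dⁿ h)'' = Dⁿ(h'') - 2n·D^{n+1} h` away from `0`. -/
theorem second_deriv_Dop_iterate (U V : Set ℝ) (hU : IsOpen U) (h0 : (0 : ℝ) ∉ U)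
    (hV : IsOpen V) (hUV : U ⊆ V) (h : ℝ → ℝ) (hh : ContDiffOn ℝ (⊤ : ℕ∞) h V)
    (n : ℕ) (hn : 1 ≤ n) (s : ℝ) (hs : s ∈ U) :
    deriv (deriv (Dop^[n] h)) s =
      Dop^[n] (deriv (deriv h)) s - 2 * n * Dop^[n+1] h s := by
  set W : Set ℝ := V \ {0} with hWdef
  have hWopen : IsOpen W := hV.sdiff isClosed_singleton
  have h0W : (0:ℝ) ∉ W := fun hmem => hmem.2 rfl
  have hsW : s ∈ W := ⟨hUV hs, fun hmem => h0 (Set.mem_singleton_iff.mp hmem ▸ hs)⟩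
  have hhW : ContDiffOn ℝ (⊤ : ℕ∞) h W := hh.mono Set.diff_subset
  have hsmooth : ∀ k, ContDiffOn ℝ (⊤ : ℕ∞) (Dop^[k] h) W := by
    intro k
    induction k with
    | zero => simpa using hhW
    | succ k ih =>
      rw [Function.iterate_succ_apply']
      exact smoothDop_aux hWopen h0W ih
  have hhW2 : ContDiffOn ℝ (⊤ : ℕ∞) (deriv (deriv h)) W :=
    (hhW.deriv_of_isOpen (m := ((⊤ : ℕ∞) : WithTop ℕ∞)) hWopen (by simp)).deriv_of_isOpen hWopen (by simp)
  have hsmooth2 : ∀ k, ContDiffOn ℝ (⊤ : ℕ∞) (Dop^[k] (deriv (deriv h))) W := by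
    intro k
    induction k with
    | zero => simpa using hhW2
    | succ k ih =>
      rw [Function.iterate_succ_apply']
      exact smoothDop_aux hWopen h0W ih
  have H : ∀ N, 1 ≤ N → ∀ t ∈ W, deriv (deriv (Dop^[N] h)) t =
      Dop^[N] (deriv (deriv h)) t - 2 * N * Dop^[N+1] h t := by
    intro N hN
    induction N, hN using Nat.le_induction with
    | base =>
      intro t ht
      have := lemB_aux hWopen h0W hhW ht
      simpa [Function.iterate_succ_apply'] using this
    | succ n hn IH =>
      intro t ht
      have hfn := hsmooth n
      have key := lemB_aux hWopen h0W hfn ht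
      rw [Function.iterate_succ_apply' Dop n h]
      rw [key]
      have hEq : deriv (deriv (Dop^[n] h)) =ᶠ[nhds t]
          fun u => Dop^[n] (deriv (deriv h)) u - 2 * n * Dop^[n+1] h u :=
        Filter.eventuallyEq_of_mem (hWopen.mem_nhds ht) IH
      have hda : DifferentiableAt ℝ (Dop^[n] (deriv (deriv h))) t :=
        ((hsmooth2 n).differentiableOn (by simp)).differentiableAt (hWopen.mem_nhds ht)
      have hdb : DifferentiableAt ℝ (Dop^[n+1] h) t :=
        ((hsmooth (n+1)).differentiableOn (by simp)).differentiableAt (hWopen.mem_nhds ht)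
      have hmid : Dop (deriv (deriv (Dop^[n] h))) t
          = Dop^[n+1] (deriv (deriv h)) t - 2 * n * Dop^[n+2] h t := by
        show t⁻¹ * deriv (deriv (deriv (Dop^[n] h))) t = _
        rw [hEq.deriv_eq, deriv_fun_sub hda (hdb.const_mul _), deriv_const_mul _ hdb,
          Function.iterate_succ_apply' Dop n (deriv (deriv h)),
          Function.iterate_succ_apply' Dop (n+1) h]
        show _ = Dop (Dop^[n] (deriv (deriv h))) t - 2 * (n:ℝ) * Dop (Dop^[n+1] h) t
        simp only [Dop]
        ring
      rw [hmid]
      have h2 : Dop (Dop (Dop^[n] h)) t = Dop^[n+2] h t := by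
        rw [Function.iterate_succ_apply' Dop (n+1) h, Function.iterate_succ_apply' Dop n h]
      rw [h2]
      push_cast
      ring
  exact H n hn s hsW
end

section
/- Let U ⊆ ℝ be an open set with 0 ∉ U and let h : ℝ → ℝ be infinitely differentiable on an open set containing U. For every positive integer n and every s ∈ U, the second derivative of the n-fold iterate Eⁿh satisfies (Eⁿ h)''(s) = Eⁿ(h'')(s) - 2n·(E^{n+1} h)(s). -/
section EopAuxSec
open scoped ContDiff

namespace EopAux

variable {W : Set ℝ}

lemma diffAt_of_smooth (hW : IsOpen W) {f : ℝ → ℝ} (hf : ContDiffOn ℝ ∞ f W)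
    {s : ℝ} (hs : s ∈ W) : DifferentiableAt ℝ f s :=
  ((hf.differentiableOn (by norm_num)).differentiableAt (hW.mem_nhds hs))

lemma smooth_deriv (hW : IsOpen W) {f : ℝ → ℝ} (hf : ContDiffOn ℝ ∞ f W) :
    ContDiffOn ℝ ∞ (deriv f) W :=
  hf.deriv_of_isOpen (m := ∞) hW (by norm_num)

lemma eop_smooth (hW : IsOpen W) (h0 : (0:ℝ) ∉ W) {f : ℝ → ℝ}
    (hf : ContDiffOn ℝ ∞ f W) : ContDiffOn ℝ ∞ (Eop f) W := by
  have hinv : ContDiffOn ℝ ∞ (fun u : ℝ => u⁻¹ * f u) W :=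
    (contDiffOn_id.inv (fun x hx hx0 => h0 (hx0 ▸ hx))).mul hf
  exact smooth_deriv hW hinv

lemma eop_iter_smooth (hW : IsOpen W) (h0 : (0:ℝ) ∉ W) {f : ℝ → ℝ}
    (hf : ContDiffOn ℝ ∞ f W) : ∀ n, ContDiffOn ℝ ∞ (Eop^[n] f) W
  | 0 => hf
  | (n+1) => by
      rw [Function.iterate_succ_apply']
      exact eop_smooth hW h0 (eop_iter_smooth hW h0 hf n)

lemma eop_congr (hW : IsOpen W) {f g : ℝ → ℝ} (hfg : ∀ x ∈ W, f x = g x)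
    {s : ℝ} (hs : s ∈ W) : Eop f s = Eop g s := by
  apply Filter.EventuallyEq.deriv_eq
  filter_upwards [hW.mem_nhds hs] with x hx
  rw [hfg x hx]

lemma eop_iter_congr (hW : IsOpen W) {f g : ℝ → ℝ} (hfg : ∀ x ∈ W, f x = g x) :
    ∀ n, ∀ s ∈ W, Eop^[n] f s = Eop^[n] g s
  | 0, s, hs => hfg s hs
  | (n+1), s, hs => by
      rw [Function.iterate_succ_apply', Function.iterate_succ_apply']
      exact eop_congr hW (fun x hx => eop_iter_congr hW hfg n x hx) hs

lemma diff_mono (a : ℝ) (k : ℤ) {p : ℝ → ℝ} {x : ℝ} (hx : x ≠ 0)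
    (hp : DifferentiableAt ℝ p x) :
    DifferentiableAt ℝ (fun u => a * u ^ k * p u) x :=
  (((differentiableAt_zpow.2 (Or.inl hx)).const_mul a).mul hp)

lemma deriv_mono (a : ℝ) (k : ℤ) {p : ℝ → ℝ} {x : ℝ} (hx : x ≠ 0)
    (hp : DifferentiableAt ℝ p x) :
    deriv (fun u => a * u ^ k * p u) x
      = a * k * x ^ (k - 1) * p x + a * x ^ k * deriv p x := by
  rw [deriv_fun_mul ((differentiableAt_zpow.2 (Or.inl hx)).const_mul a) hp,
    deriv_const_mul _ (differentiableAt_zpow.2 (Or.inl hx)), deriv_zpow]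
  ring

lemma eop_eq (hW : IsOpen W) (h0 : (0:ℝ) ∉ W) {f : ℝ → ℝ} (hf : ContDiffOn ℝ ∞ f W)
    {x : ℝ} (hx : x ∈ W) :
    Eop f x = 1 * x ^ (-1 : ℤ) * deriv f x + (-1) * x ^ (-2 : ℤ) * f x := by
  have hx0 : x ≠ 0 := fun h => h0 (h ▸ hx)
  have h1 : Eop f x = deriv (fun u => 1 * u ^ (-1:ℤ) * f u) x := by
    unfold Eop; congr 1; funext u; rw [zpow_neg_one]; ring
  rw [h1, deriv_mono 1 (-1) hx0 (diffAt_of_smooth hW hf hx)]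
  norm_num
  ring

lemma eop_sub (hW : IsOpen W) (h0 : (0:ℝ) ∉ W) {g1 g2 : ℝ → ℝ}
    (h1 : ContDiffOn ℝ ∞ g1 W) (h2 : ContDiffOn ℝ ∞ g2 W) (c : ℝ)
    {s : ℝ} (hs : s ∈ W) :
    Eop (fun u => g1 u - c * g2 u) s = Eop g1 s - c * Eop g2 s := by
  have hs0 : s ≠ 0 := fun h => h0 (h ▸ hs)
  unfold Eop
  have e : (fun u : ℝ => u⁻¹ * (g1 u - c * g2 u))
      = fun u => u⁻¹ * g1 u - c * (u⁻¹ * g2 u) := by funext u; ring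
  have d1 : DifferentiableAt ℝ (fun u : ℝ => u⁻¹ * g1 u) s :=
    (differentiableAt_inv hs0).mul (diffAt_of_smooth hW h1 hs)
  have d2 : DifferentiableAt ℝ (fun u : ℝ => u⁻¹ * g2 u) s :=
    (differentiableAt_inv hs0).mul (diffAt_of_smooth hW h2 hs)
  rw [e, deriv_fun_sub d1 (d2.const_mul c), deriv_const_mul _ d2]

lemma eop_iter_sub (hW : IsOpen W) (h0 : (0:ℝ) ∉ W) {g1 g2 : ℝ → ℝ}
    (h1 : ContDiffOn ℝ ∞ g1 W) (h2 : ContDiffOn ℝ ∞ g2 W) (c : ℝ) :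
    ∀ n, ∀ s ∈ W, Eop^[n] (fun u => g1 u - c * g2 u) s
      = Eop^[n] g1 s - c * Eop^[n] g2 s
  | 0, s, hs => rfl
  | (n+1), s, hs => by
      rw [Function.iterate_succ_apply', Function.iterate_succ_apply',
        Function.iterate_succ_apply']
      rw [eop_congr hW (fun x hx => eop_iter_sub hW h0 h1 h2 c n x hx) hs]
      exact eop_sub hW h0 (eop_iter_smooth hW h0 h1 n) (eop_iter_smooth hW h0 h2 n) c hs

lemma key (hW : IsOpen W) (h0 : (0:ℝ) ∉ W) {f : ℝ → ℝ} (hf : ContDiffOn ℝ ∞ f W)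
    {s : ℝ} (hs : s ∈ W) :
    deriv (deriv (Eop f)) s = Eop (deriv (deriv f)) s - 2 * Eop (Eop f) s := by
  have hs0 : s ≠ 0 := fun h => h0 (h ▸ hs)
  set d1 := deriv f with hd1def
  set d2 := deriv d1 with hd2def
  have hd1 : ContDiffOn ℝ ∞ d1 W := smooth_deriv hW hf
  have hd2 : ContDiffOn ℝ ∞ d2 W := smooth_deriv hW hd1
  have hfA : ∀ x ∈ W, DifferentiableAt ℝ f x := fun x hx => diffAt_of_smooth hW hf hx
  have hd1A : ∀ x ∈ W, DifferentiableAt ℝ d1 x := fun x hx => diffAt_of_smooth hW hd1 hx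
  have hd2A : ∀ x ∈ W, DifferentiableAt ℝ d2 x := fun x hx => diffAt_of_smooth hW hd2 hx
  -- Step B : derivative of Eop f on W
  have hB : ∀ x ∈ W, deriv (Eop f) x
      = 1 * x ^ (-1:ℤ) * d2 x + (-2) * x ^ (-2:ℤ) * d1 x + 2 * x ^ (-3:ℤ) * f x := by
    intro x hx
    have hx0 : x ≠ 0 := fun h => h0 (h ▸ hx)
    have hev : Eop f =ᶠ[nhds x]
        fun u => 1 * u ^ (-1:ℤ) * d1 u + (-1) * u ^ (-2:ℤ) * f u := by
      filter_upwards [hW.mem_nhds hx] with u hu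
      exact eop_eq hW h0 hf hu
    rw [hev.deriv_eq,
      deriv_fun_add (diff_mono 1 (-1) hx0 (hd1A x hx)) (diff_mono (-1) (-2) hx0 (hfA x hx)),
      deriv_mono 1 (-1) hx0 (hd1A x hx), deriv_mono (-1) (-2) hx0 (hfA x hx)]
    norm_num
    ring
  -- Step C : second derivative at s
  have hC : deriv (deriv (Eop f)) s
      = 1 * s ^ (-1:ℤ) * deriv d2 s + (-3) * s ^ (-2:ℤ) * d2 s
        + 6 * s ^ (-3:ℤ) * d1 s + (-6) * s ^ (-4:ℤ) * f s := by
    have hev : deriv (Eop f) =ᶠ[nhds s]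
        fun u => 1 * u ^ (-1:ℤ) * d2 u + (-2) * u ^ (-2:ℤ) * d1 u + 2 * u ^ (-3:ℤ) * f u := by
      filter_upwards [hW.mem_nhds hs] with u hu
      exact hB u hu
    rw [hev.deriv_eq,
      deriv_fun_add ((diff_mono 1 (-1) hs0 (hd2A s hs)).fun_add (diff_mono (-2) (-2) hs0 (hd1A s hs)))
        (diff_mono 2 (-3) hs0 (hfA s hs)),
      deriv_fun_add (diff_mono 1 (-1) hs0 (hd2A s hs)) (diff_mono (-2) (-2) hs0 (hd1A s hs)),
      deriv_mono 1 (-1) hs0 (hd2A s hs), deriv_mono (-2) (-2) hs0 (hd1A s hs),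
      deriv_mono 2 (-3) hs0 (hfA s hs)]
    norm_num
    ring
  -- Step E : Eop (Eop f) at s
  have hE : Eop (Eop f) s
      = 1 * s ^ (-2:ℤ) * d2 s + (-3) * s ^ (-3:ℤ) * d1 s + 3 * s ^ (-4:ℤ) * f s := by
    have hev : (fun u : ℝ => u⁻¹ * Eop f u) =ᶠ[nhds s]
        fun u => 1 * u ^ (-2:ℤ) * d1 u + (-1) * u ^ (-3:ℤ) * f u := by
      filter_upwards [hW.mem_nhds hs] with u hu
      rw [eop_eq hW h0 hf hu, ← zpow_neg_one u]
      have h2 : (u:ℝ) ^ (-2:ℤ) = u ^ (-1:ℤ) * u ^ (-1:ℤ) := by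
        rw [← zpow_add₀]; · norm_num
        · exact fun h => h0 (h ▸ hu)
      have h3 : (u:ℝ) ^ (-3:ℤ) = u ^ (-1:ℤ) * u ^ (-2:ℤ) := by
        rw [← zpow_add₀]; · norm_num
        · exact fun h => h0 (h ▸ hu)
      rw [h3, h2]; ring
    show deriv (fun u : ℝ => u⁻¹ * Eop f u) s = _
    rw [hev.deriv_eq,
      deriv_fun_add (diff_mono 1 (-2) hs0 (hd1A s hs)) (diff_mono (-1) (-3) hs0 (hfA s hs)),
      deriv_mono 1 (-2) hs0 (hd1A s hs), deriv_mono (-1) (-3) hs0 (hfA s hs)]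
    norm_num
    ring
  -- Step D : Eop d2 at s
  have hD : Eop (deriv (deriv f)) s
      = 1 * s ^ (-1:ℤ) * deriv d2 s + (-1) * s ^ (-2:ℤ) * d2 s :=
    eop_eq hW h0 hd2 hs
  rw [hC, hD, hE]
  ring

lemma main_aux (hW : IsOpen W) (h0 : (0:ℝ) ∉ W) :
    ∀ n, 1 ≤ n → ∀ f : ℝ → ℝ, ContDiffOn ℝ ∞ f W → ∀ s ∈ W,
      deriv (deriv (Eop^[n] f)) s
        = Eop^[n] (deriv (deriv f)) s - 2 * n * Eop^[n+1] f s := by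
  intro n
  induction n with
  | zero => intro h; omega
  | succ n ih =>
    intro _ f hf s hs
    rcases Nat.eq_zero_or_pos n with hn0 | hn1
    · subst hn0
      simpa using key hW h0 hf hs
    · have hEf : ContDiffOn ℝ ∞ (Eop f) W := eop_smooth hW h0 hf
      have step1 : deriv (deriv (Eop^[n+1] f)) s
          = Eop^[n] (deriv (deriv (Eop f))) s - 2 * n * Eop^[n+1] (Eop f) s := by
        rw [Function.iterate_succ_apply]
        exact ih hn1 (Eop f) hEf s hs
      have hg1 : ContDiffOn ℝ ∞ (Eop (deriv (deriv f))) W :=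
        eop_smooth hW h0 (smooth_deriv hW (smooth_deriv hW hf))
      have hg2 : ContDiffOn ℝ ∞ (Eop (Eop f)) W := eop_smooth hW h0 hEf
      have step2 : Eop^[n] (deriv (deriv (Eop f))) s
          = Eop^[n] (Eop (deriv (deriv f))) s - 2 * Eop^[n] (Eop (Eop f)) s := by
        rw [eop_iter_congr hW (fun x hx => key hW h0 hf hx) n s hs]
        exact eop_iter_sub hW h0 hg1 hg2 2 n s hs
      rw [step1, step2, ← Function.iterate_succ_apply, ← Function.iterate_succ_apply,
        ← Function.iterate_succ_apply]
      push_cast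
      ring

end EopAux

end EopAuxSec

/-- `(Eⁿ h)'' = Eⁿ(h'') - 2n·E^{n+1} h` away from `0`. -/
theorem second_deriv_Eop_iterate (U V : Set ℝ) (hU : IsOpen U) (h0 : (0 : ℝ) ∉ U)
    (hV : IsOpen V) (hUV : U ⊆ V) (h : ℝ → ℝ) (hh : ContDiffOn ℝ (⊤ : ℕ∞) h V)
    (n : ℕ) (hn : 1 ≤ n) (s : ℝ) (hs : s ∈ U) :
    deriv (deriv (Eop^[n] h)) s =
      Eop^[n] (deriv (deriv h)) s - 2 * n * Eop^[n+1] h s := by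
  set W : Set ℝ := V \ {0} with hWdef
  have hWopen : IsOpen W := hV.sdiff isClosed_singleton
  have h0W : (0:ℝ) ∉ W := fun hx => hx.2 rfl
  have hUW : U ⊆ W := fun x hx => ⟨hUV hx, fun hx0 => h0 (by rw [Set.mem_singleton_iff] at hx0; rw [← hx0]; exact hx)⟩
  have hhW : ContDiffOn ℝ ((⊤:ℕ∞) : WithTop ℕ∞) h W := (hh.of_le (by simp)).mono Set.diff_subset
  exact EopAux.main_aux hWopen h0W n hn h hhW s (hUW hs)
end

section
/- Let U ⊆ ℝ be an open set with 0 ∉ U and let h : ℝ → ℝ be infinitely differentiable on an open set containing U. For every positive integer n and every s ∈ U, Dⁿ(h')(s) - (Eⁿ h)'(s) = (2n/s)·(Eⁿ h)(s). -/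
lemma Eop_eval {g : ℝ → ℝ} {s : ℝ} (hs : s ≠ 0) (hg : DifferentiableAt ℝ g s) :
    Eop g s = -(s ^ 2)⁻¹ * g s + s⁻¹ * deriv g s :=
  ((hasDerivAt_inv hs).mul hg.hasDerivAt).deriv

lemma contDiffOn_Eop {W : Set ℝ} (hW : IsOpen W) (h0 : ∀ u ∈ W, u ≠ (0:ℝ))
    {g : ℝ → ℝ} (hg : ContDiffOn ℝ (⊤ : ℕ∞) g W) : ContDiffOn ℝ (⊤ : ℕ∞) (Eop g) W := by
  have h1 : ContDiffOn ℝ (⊤ : ℕ∞) (fun u : ℝ => u⁻¹ * g u) W :=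
    (contDiffOn_id.inv h0).mul hg
  exact h1.deriv_of_isOpen hW (by simp)

lemma diffAt_of_cdOn {W : Set ℝ} (hW : IsOpen W) {g : ℝ → ℝ}
    (hg : ContDiffOn ℝ (⊤ : ℕ∞) g W) {s : ℝ} (hs : s ∈ W) : DifferentiableAt ℝ g s :=
  (hg.contDiffAt (hW.mem_nhds hs)).differentiableAt (by simp)

lemma deriv_Eop {W : Set ℝ} (hW : IsOpen W) (h0 : ∀ u ∈ W, u ≠ (0:ℝ))
    {g : ℝ → ℝ} (hg : ContDiffOn ℝ (⊤ : ℕ∞) g W) {s : ℝ} (hs : s ∈ W) :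
    deriv (Eop g) s =
      s⁻¹ * deriv (deriv g) s - 2 * (s ^ 2)⁻¹ * deriv g s + 2 * (s ^ 3)⁻¹ * g s := by
  have hs0 : s ≠ 0 := h0 s hs
  have hg' : ContDiffOn ℝ (⊤ : ℕ∞) (deriv g) W := hg.deriv_of_isOpen hW (by simp)
  have heq : Eop g =ᶠ[nhds s] fun u => -(u ^ 2)⁻¹ * g u + u⁻¹ * deriv g u := by
    filter_upwards [hW.mem_nhds hs] with u hu
    exact Eop_eval (h0 u hu) (diffAt_of_cdOn hW hg hu)
  rw [heq.deriv_eq]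
  have hgd : HasDerivAt g (deriv g s) s := (diffAt_of_cdOn hW hg hs).hasDerivAt
  have hg'd : HasDerivAt (deriv g) (deriv (deriv g) s) s :=
    (diffAt_of_cdOn hW hg' hs).hasDerivAt
  have hp : HasDerivAt (fun u : ℝ => (u ^ 2)⁻¹) (-(2 * s ^ 1) / (s ^ 2) ^ 2) s := by
    have := (hasDerivAt_pow 2 s).inv (pow_ne_zero 2 hs0)
    simpa [Pi.inv_def] using this
  have hA : HasDerivAt (fun u : ℝ => -(u ^ 2)⁻¹ * g u)
      ((-(-(2 * s ^ 1) / (s ^ 2) ^ 2)) * g s + (-(s ^ 2)⁻¹) * deriv g s) s :=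
    hp.neg.mul hgd
  have hB : HasDerivAt (fun u : ℝ => u⁻¹ * deriv g u)
      ((-(s ^ 2)⁻¹) * deriv g s + s⁻¹ * deriv (deriv g) s) s :=
    (hasDerivAt_inv hs0).mul hg'd
  rw [(hA.fun_add hB).deriv]
  field_simp
  ring

lemma contDiffOn_Eop_iter {W : Set ℝ} (hW : IsOpen W) (h0 : ∀ u ∈ W, u ≠ (0:ℝ))
    {h : ℝ → ℝ} (hh : ContDiffOn ℝ (⊤ : ℕ∞) h W) (n : ℕ) :
    ContDiffOn ℝ (⊤ : ℕ∞) (Eop^[n] h) W := by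
  induction n with
  | zero => simpa using hh
  | succ n ih => rw [Function.iterate_succ_apply']; exact contDiffOn_Eop hW h0 ih

lemma key {W : Set ℝ} (hW : IsOpen W) (h0 : ∀ u ∈ W, u ≠ (0:ℝ))
    {h : ℝ → ℝ} (hh : ContDiffOn ℝ (⊤ : ℕ∞) h W) :
    ∀ n, 1 ≤ n → ∀ s ∈ W,
      Dop^[n] (deriv h) s - deriv (Eop^[n] h) s = (2 * n / s) * Eop^[n] h s := by
  intro n
  induction n with
  | zero => omega
  | succ n ih =>
    intro _ s hs
    have hs0 : s ≠ 0 := h0 s hs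
    rcases Nat.eq_zero_or_pos n with rfl | hn
    · -- base case n = 1
      have hh' : ContDiffOn ℝ (⊤ : ℕ∞) (deriv h) W := hh.deriv_of_isOpen hW (by simp)
      simp only [zero_add, Function.iterate_one]
      rw [deriv_Eop hW h0 hh hs,
        Eop_eval hs0 (diffAt_of_cdOn hW hh hs)]
      show s⁻¹ * deriv (deriv h) s - _ = _
      field_simp
      ring
    · set B := Eop^[n] h with hBdef
      have hB : ContDiffOn ℝ (⊤ : ℕ∞) B W := contDiffOn_Eop_iter hW h0 hh n
      have hB' : ContDiffOn ℝ (⊤ : ℕ∞) (deriv B) W := hB.deriv_of_isOpen hW (by simp)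
      have hBd : HasDerivAt B (deriv B s) s := (diffAt_of_cdOn hW hB hs).hasDerivAt
      have hB'd : HasDerivAt (deriv B) (deriv (deriv B) s) s :=
        (diffAt_of_cdOn hW hB' hs).hasDerivAt
      -- A = Dop^[n] (deriv h)
      have hAeq : Dop^[n] (deriv h) =ᶠ[nhds s]
          fun u => deriv B u + 2 * (n : ℝ) * u⁻¹ * B u := by
        filter_upwards [hW.mem_nhds hs] with u hu
        have := ih hn u hu
        have hu0 : u ≠ 0 := h0 u hu
        field_simp at this ⊢
        linarith
      have hstep : HasDerivAt (fun u : ℝ => deriv B u + 2 * (n : ℝ) * u⁻¹ * B u)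
          (deriv (deriv B) s +
            ((2 * (n : ℝ) * -(s ^ 2)⁻¹) * B s + (2 * (n : ℝ) * s⁻¹) * deriv B s)) s :=
        hB'd.add (((hasDerivAt_inv hs0).const_mul (2 * (n : ℝ))).mul hBd)
      have hDA : Dop^[n+1] (deriv h) s =
          s⁻¹ * (deriv (deriv B) s +
            ((2 * (n : ℝ) * -(s ^ 2)⁻¹) * B s + (2 * (n : ℝ) * s⁻¹) * deriv B s)) := by
        rw [Function.iterate_succ_apply']
        show s⁻¹ * deriv (Dop^[n] (deriv h)) s = _
        rw [hAeq.deriv_eq, hstep.deriv]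
      have hEeq : Eop^[n+1] h = Eop B := by rw [Function.iterate_succ_apply']
      rw [hDA, hEeq, deriv_Eop hW h0 hB hs, Eop_eval hs0 (diffAt_of_cdOn hW hB hs)]
      push_cast
      field_simp
      ring

/-- `Dⁿ(h') - (Eⁿ h)' = (2n/s)·Eⁿ h` away from `0`. -/
theorem Dop_iterate_deriv_sub (U V : Set ℝ) (hU : IsOpen U) (h0 : (0 : ℝ) ∉ U)
    (hV : IsOpen V) (hUV : U ⊆ V) (h : ℝ → ℝ) (hh : ContDiffOn ℝ (⊤ : ℕ∞) h V)
    (n : ℕ) (hn : 1 ≤ n) (s : ℝ) (hs : s ∈ U) :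
    Dop^[n] (deriv h) s - deriv (Eop^[n] h) s = (2 * n / s) * Eop^[n] h s := by
  have hW : IsOpen (V \ {0} : Set ℝ) := hV.sdiff isClosed_singleton
  have h0' : ∀ u ∈ V \ {0}, u ≠ (0:ℝ) := fun u hu => hu.2
  have hUW : U ⊆ V \ {0} := fun u hu => ⟨hUV hu, fun he => h0 (he ▸ hu)⟩
  exact key hW h0' (hh.mono Set.diff_subset) n hn s (hUW hs)
end

section
/- Let Ξ be an open subset of the upper half-plane {(a,b) ∈ ℝ² : b > 0}, and let u, v : ℝ² → ℝ be smooth on Ξ and satisfy the Cauchy–Riemann equations ∂_a u = ∂_b v and ∂_b u = -∂_a v on Ξ. For a positive integer n, define M(a,b) = (Dⁿ u(a,·))(b) and N(a,b) = (Eⁿ v(a,·))(b), where the operators (D f)(s) = s⁻¹·f'(s) and (E f)(s) = (d/ds)(s⁻¹·f(s)) are applied n times in the second variable. Then on Ξ one has ∂_a M - ∂_b N = (2n/b)·N and ∂_b M + ∂_a N = 0. -/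
section helpers
variable {Ξ : Set (ℝ × ℝ)} {F G : ℝ × ℝ → ℝ} {w : ℝ × ℝ}

lemma diffAt_of_cd (hΞo : IsOpen Ξ) (hF : ContDiffOn ℝ (⊤ : ℕ∞) F Ξ) (hw : w ∈ Ξ) :
    DifferentiableAt ℝ F w :=
  (hF.contDiffAt (hΞo.mem_nhds hw)).differentiableAt (by simp)

lemma sliceb_diff (hF : DifferentiableAt ℝ F w) :
    DifferentiableAt ℝ (fun s => F (w.1, s)) w.2 := by
  have : DifferentiableAt ℝ (fun s : ℝ => (w.1, s)) w.2 :=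
    (differentiableAt_const _).prodMk differentiableAt_id
  simpa [Function.comp_def] using hF.comp w.2 (by simpa using this)

lemma slicea_diff (hF : DifferentiableAt ℝ F w) :
    DifferentiableAt ℝ (fun s => F (s, w.2)) w.1 := by
  have : DifferentiableAt ℝ (fun s : ℝ => (s, w.2)) w.1 :=
    differentiableAt_id.prodMk (differentiableAt_const _)
  simpa [Function.comp_def] using hF.comp w.1 (by simpa using this)

lemma sliceb_hasDerivAt (hF : DifferentiableAt ℝ F w) :
    HasDerivAt (fun s => F (w.1, s)) (pdb F w) w.2 :=
  (sliceb_diff hF).hasDerivAt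

lemma pdb_eq_fderiv (hF : DifferentiableAt ℝ F w) :
    pdb F w = fderiv ℝ F w (0, 1) := by
  have h1 : HasDerivAt (fun s : ℝ => (w.1, s)) ((0 : ℝ), (1 : ℝ)) w.2 :=
    (hasDerivAt_const _ _).prodMk (hasDerivAt_id _)
  have h2 := hF.hasFDerivAt.comp_hasDerivAt w.2 (by simpa using h1)
  simpa [pdb, Function.comp_def] using h2.deriv

lemma pda_eq_fderiv (hF : DifferentiableAt ℝ F w) :
    pda F w = fderiv ℝ F w (1, 0) := by
  have h1 : HasDerivAt (fun s : ℝ => (s, w.2)) ((1 : ℝ), (0 : ℝ)) w.1 :=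
    (hasDerivAt_id _).prodMk (hasDerivAt_const _ _)
  have h2 := hF.hasFDerivAt.comp_hasDerivAt w.1 (by simpa using h1)
  simpa [pda, Function.comp_def] using h2.deriv

lemma fderiv_cd (hΞo : IsOpen Ξ) (hF : ContDiffOn ℝ (⊤ : ℕ∞) F Ξ) :
    ContDiffOn ℝ (⊤ : ℕ∞) (fun w => fderiv ℝ F w) Ξ :=
  hF.fderiv_of_isOpen hΞo (by simp)

lemma pdb_contDiffOn (hΞo : IsOpen Ξ) (hF : ContDiffOn ℝ (⊤ : ℕ∞) F Ξ) :
    ContDiffOn ℝ (⊤ : ℕ∞) (pdb F) Ξ := by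
  have h : ContDiffOn ℝ (⊤ : ℕ∞) (fun w => fderiv ℝ F w (0, 1)) Ξ :=
    (fderiv_cd hΞo hF).clm_apply contDiffOn_const
  exact h.congr fun w hw => pdb_eq_fderiv (diffAt_of_cd hΞo hF hw)

lemma pdb_congr (hΞo : IsOpen Ξ) (h : ∀ w ∈ Ξ, F w = G w) (hw : w ∈ Ξ) :
    pdb F w = pdb G w := by
  have hmem : ∀ᶠ s in nhds w.2, (w.1, s) ∈ Ξ := by
    have hc : ContinuousAt (fun s : ℝ => (w.1, s)) w.2 := by fun_prop
    exact hc.preimage_mem_nhds (hΞo.mem_nhds (by simpa using hw))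
  exact Filter.EventuallyEq.deriv_eq (hmem.mono fun s hs => h _ hs)

lemma pda_congr (hΞo : IsOpen Ξ) (h : ∀ w ∈ Ξ, F w = G w) (hw : w ∈ Ξ) :
    pda F w = pda G w := by
  have hmem : ∀ᶠ s in nhds w.1, (s, w.2) ∈ Ξ := by
    have hc : ContinuousAt (fun s : ℝ => (s, w.2)) w.1 := by fun_prop
    exact hc.preimage_mem_nhds (hΞo.mem_nhds (by simpa using hw))
  exact Filter.EventuallyEq.deriv_eq (hmem.mono fun s hs => h _ hs)

lemma schwarz (hΞo : IsOpen Ξ) (hF : ContDiffOn ℝ (⊤ : ℕ∞) F Ξ) (hw : w ∈ Ξ) :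
    pda (pdb F) w = pdb (pda F) w := by
  have hsym : ∀ a b : ℝ × ℝ, fderiv ℝ (fderiv ℝ F) w a b = fderiv ℝ (fderiv ℝ F) w b a := by
    have := (hF.contDiffAt (hΞo.mem_nhds hw)).isSymmSndFDerivAt ((by rw [minSmoothness_of_isRCLikeNormedField]; exact (WithTop.coe_le_coe (a := ⊤) (b := (2:ℕ∞))).mpr le_top))
    exact fun a b => this a b
  have hΦ : ContDiffOn ℝ (⊤ : ℕ∞) (fun w => fderiv ℝ F w) Ξ := fderiv_cd hΞo hF
  have hΦd : DifferentiableAt ℝ (fun w => fderiv ℝ F w) w :=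
    (hΦ.contDiffAt (hΞo.mem_nhds hw)).differentiableAt (by simp)
  have key : ∀ e e' : ℝ × ℝ,
      pda (fun w => fderiv ℝ F w e) w = fderiv ℝ (fderiv ℝ F) w (1, 0) e ∧
      pdb (fun w => fderiv ℝ F w e') w = fderiv ℝ (fderiv ℝ F) w (0, 1) e' := by
    intro e e'
    have hde : DifferentiableAt ℝ (fun w => fderiv ℝ F w e) w :=
      hΦd.clm_apply (differentiableAt_const _)
    have hde' : DifferentiableAt ℝ (fun w => fderiv ℝ F w e') w :=
      hΦd.clm_apply (differentiableAt_const _)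
    constructor
    · rw [pda_eq_fderiv hde, fderiv_clm_apply hΦd (differentiableAt_const _)]
      simp
    · rw [pdb_eq_fderiv hde', fderiv_clm_apply hΦd (differentiableAt_const _)]
      simp
  calc pda (pdb F) w = pda (fun w => fderiv ℝ F w (0,1)) w :=
        pda_congr hΞo (fun w' hw' => pdb_eq_fderiv (diffAt_of_cd hΞo hF hw')) hw
    _ = fderiv ℝ (fderiv ℝ F) w (1,0) (0,1) := (key (0,1) (0,1)).1
    _ = fderiv ℝ (fderiv ℝ F) w (0,1) (1,0) := hsym _ _
    _ = pdb (fun w => fderiv ℝ F w (1,0)) w := ((key (1,0) (1,0)).2).symm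
    _ = pdb (pda F) w :=
        (pdb_congr hΞo (fun w' hw' => (pda_eq_fderiv (diffAt_of_cd hΞo hF hw')).symm) hw)

end helpers

lemma vekua_key (Ξ : Set (ℝ × ℝ)) (hΞo : IsOpen Ξ) (hΞ : Ξ ⊆ UHP)
    (u v : ℝ × ℝ → ℝ) (hu : ContDiffOn ℝ (⊤ : ℕ∞) u Ξ) (hv : ContDiffOn ℝ (⊤ : ℕ∞) v Ξ)
    (hCR : ∀ w ∈ Ξ, pda u w = pdb v w ∧ pdb u w = - pda v w) :
    ∀ k : ℕ, ∀ M N : ℝ × ℝ → ℝ,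
      M = (fun w => Dop^[k] (fun s => u (w.1, s)) w.2) →
      N = (fun w => Eop^[k] (fun s => v (w.1, s)) w.2) →
      ContDiffOn ℝ (⊤ : ℕ∞) M Ξ ∧ ContDiffOn ℝ (⊤ : ℕ∞) N Ξ ∧
      ∀ w ∈ Ξ, (pda M w = pdb N w + 2 * (k : ℝ) / w.2 * N w) ∧ (pdb M w = - pda N w) := by
  have hb2 : ∀ w : ℝ × ℝ, w ∈ Ξ → w.2 ≠ 0 := fun w hw => (hΞ hw).ne'
  intro k
  induction k with
  | zero =>
    intro M N hM hN
    have hM' : M = u := by rw [hM]; funext w; simp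
    have hN' : N = v := by rw [hN]; funext w; simp
    subst hM' hN'
    refine ⟨hu, hv, fun w hw => ⟨?_, (hCR w hw).2⟩⟩
    simp [(hCR w hw).1]
  | succ k ih =>
    intro M N hM hN
    obtain ⟨hCU, hCV, hid⟩ := ih (fun w => Dop^[k] (fun s => u (w.1, s)) w.2)
      (fun w => Eop^[k] (fun s => v (w.1, s)) w.2) rfl rfl
    set Uk : ℝ × ℝ → ℝ := fun w => Dop^[k] (fun s => u (w.1, s)) w.2 with hUk
    set Vk : ℝ × ℝ → ℝ := fun w => Eop^[k] (fun s => v (w.1, s)) w.2 with hVk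
    have hM' : M = fun w => w.2⁻¹ * pdb Uk w := by
      rw [hM]; funext w; rw [Function.iterate_succ_apply']; rfl
    have hN' : N = pdb (fun w => w.2⁻¹ * Vk w) := by
      rw [hN]; funext w; rw [Function.iterate_succ_apply']; rfl
    have hinv : ContDiffOn ℝ (⊤ : ℕ∞) (fun w : ℝ × ℝ => w.2⁻¹) Ξ :=
      (contDiff_snd.contDiffOn).inv fun w hw => hb2 w hw
    have hPU : ContDiffOn ℝ (⊤ : ℕ∞) (pdb Uk) Ξ := pdb_contDiffOn hΞo hCU
    have hPV : ContDiffOn ℝ (⊤ : ℕ∞) (pdb Vk) Ξ := pdb_contDiffOn hΞo hCV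
    have hW : ContDiffOn ℝ (⊤ : ℕ∞) (fun w => w.2⁻¹ * Vk w) Ξ := hinv.mul hCV
    have hCM : ContDiffOn ℝ (⊤ : ℕ∞) M Ξ := by rw [hM']; exact hinv.mul hPU
    have hCN : ContDiffOn ℝ (⊤ : ℕ∞) N Ξ := by rw [hN']; exact pdb_contDiffOn hΞo hW
    refine ⟨hCM, hCN, fun w hw => ?_⟩
    have hb : (0:ℝ) < w.2 := hΞ hw
    have hb0 : w.2 ≠ 0 := hb.ne'
    have hinv' : HasDerivAt (fun s : ℝ => s⁻¹) (-(w.2 ^ 2)⁻¹) w.2 := hasDerivAt_inv hb0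
    have sVk : HasDerivAt (fun s => Vk (w.1, s)) (pdb Vk w) w.2 :=
      sliceb_hasDerivAt (diffAt_of_cd hΞo hCV hw)
    have sPU : HasDerivAt (fun s => pdb Uk (w.1, s)) (pdb (pdb Uk) w) w.2 :=
      sliceb_hasDerivAt (diffAt_of_cd hΞo hPU hw)
    have sPV : HasDerivAt (fun s => pdb Vk (w.1, s)) (pdb (pdb Vk) w) w.2 :=
      sliceb_hasDerivAt (diffAt_of_cd hΞo hPV hw)
    -- value of N
    have fN : N w = -(w.2 ^ 2)⁻¹ * Vk w + w.2⁻¹ * pdb Vk w := by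
      rw [hN']
      simpa [pdb] using (hinv'.fun_mul sVk).deriv
    -- ∂b of W on Ξ
    have hNG : ∀ w' ∈ Ξ, pdb (fun w => w.2⁻¹ * Vk w) w'
        = -(w'.2 ^ 2)⁻¹ * Vk w' + w'.2⁻¹ * pdb Vk w' := by
      intro w' hw'
      have h1 : HasDerivAt (fun s : ℝ => s⁻¹) (-(w'.2 ^ 2)⁻¹) w'.2 := hasDerivAt_inv (hb2 w' hw')
      have h2 : HasDerivAt (fun s => Vk (w'.1, s)) (pdb Vk w') w'.2 :=
        sliceb_hasDerivAt (diffAt_of_cd hΞo hCV hw')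
      simpa [pdb] using (h1.fun_mul h2).deriv
    -- ∂b N
    have hsq : HasDerivAt (fun s : ℝ => -(s ^ 2)⁻¹) (2 * (w.2 ^ 3)⁻¹) w.2 := by
      have h := ((hasDerivAt_pow 2 w.2).fun_inv (pow_ne_zero 2 hb0)).fun_neg
      refine h.congr_deriv ?_
      field_simp
      ring
    have fbN : pdb N w = (2 * (w.2 ^ 3)⁻¹ * Vk w + -(w.2 ^ 2)⁻¹ * pdb Vk w)
        + (-(w.2 ^ 2)⁻¹ * pdb Vk w + w.2⁻¹ * pdb (pdb Vk) w) := by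
      rw [hN', pdb_congr hΞo hNG hw]
      simpa [pdb] using ((hsq.fun_mul sVk).fun_add (hinv'.fun_mul sPV)).deriv
    -- ∂b M
    have fbM : pdb M w = -(w.2 ^ 2)⁻¹ * pdb Uk w + w.2⁻¹ * pdb (pdb Uk) w := by
      rw [hM']
      simpa [pdb] using (hinv'.fun_mul sPU).deriv
    -- ∂a N  (via Schwarz on W and CR for step k)
    have hpaW : ∀ w' ∈ Ξ, pda (fun w => w.2⁻¹ * Vk w) w' = w'.2⁻¹ * (-(pdb Uk w')) := by
      intro w' hw'
      have hd : DifferentiableAt ℝ (fun s => Vk (s, w'.2)) w'.1 :=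
        slicea_diff (diffAt_of_cd hΞo hCV hw')
      have h1 : pda (fun w => w.2⁻¹ * Vk w) w' = w'.2⁻¹ * pda Vk w' := by
        simp only [pda]
        exact deriv_const_mul _ hd
      have h2 : pda Vk w' = -(pdb Uk w') := by
        have := (hid w' hw').2; linarith
      rw [h1, h2]
    have faN : pda N w = -(w.2 ^ 2)⁻¹ * (-(pdb Uk w)) + w.2⁻¹ * (-(pdb (pdb Uk) w)) := by
      rw [hN', schwarz hΞo hW hw, pdb_congr hΞo hpaW hw]
      simpa [pdb] using (hinv'.fun_mul sPU.fun_neg).deriv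
    -- ∂a M  (via Schwarz on Uk and the step-k identity)
    have hcong : ∀ w' ∈ Ξ, pda Uk w'
        = pdb Vk w' + (2 * (k:ℝ) * w'.2⁻¹) * Vk w' := by
      intro w' hw'
      rw [(hid w' hw').1, div_eq_mul_inv]
    have hk : HasDerivAt (fun s : ℝ => 2 * (k:ℝ) * s⁻¹) (2 * (k:ℝ) * -(w.2 ^ 2)⁻¹) w.2 :=
      hinv'.const_mul _
    have faM : pda M w = w.2⁻¹ * (pdb (pdb Vk) w
        + (2 * (k:ℝ) * -(w.2 ^ 2)⁻¹ * Vk w + 2 * (k:ℝ) * w.2⁻¹ * pdb Vk w)) := by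
      rw [hM']
      have hd : DifferentiableAt ℝ (fun s => pdb Uk (s, w.2)) w.1 :=
        slicea_diff (diffAt_of_cd hΞo hPU hw)
      have h1 : pda (fun w => w.2⁻¹ * pdb Uk w) w = w.2⁻¹ * pda (pdb Uk) w := by
        simp only [pda]
        exact deriv_const_mul _ hd
      rw [h1, schwarz hΞo hCU hw, pdb_congr hΞo hcong hw]
      congr 1
      simpa [pdb] using (sPV.fun_add (hk.fun_mul sVk)).deriv
    constructor
    · rw [faM, fbN, fN]
      push_cast
      field_simp
      ring
    · rw [fbM, faN]
      ring


/-- the pair `(Dⁿu, Eⁿv)` (in the second variable) satisfies the Vekua-type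
system with parameter `2n`, for `u + iv` holomorphic. -/
theorem vekua_of_CR (Ξ : Set (ℝ × ℝ)) (hΞo : IsOpen Ξ) (hΞ : Ξ ⊆ UHP)
    (u v : ℝ × ℝ → ℝ) (hu : ContDiffOn ℝ (⊤ : ℕ∞) u Ξ) (hv : ContDiffOn ℝ (⊤ : ℕ∞) v Ξ)
    (hCR : ∀ w ∈ Ξ, pda u w = pdb v w ∧ pdb u w = - pda v w)
    (n : ℕ) (hn : 1 ≤ n)
    (M N : ℝ × ℝ → ℝ)
    (hM : M = fun w => Dop^[n] (fun s => u (w.1, s)) w.2)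
    (hN : N = fun w => Eop^[n] (fun s => v (w.1, s)) w.2) :
    ∀ w ∈ Ξ, pda M w - pdb N w = (2 * n / w.2) * N w ∧ pdb M w + pda N w = 0 := by
  obtain ⟨-, -, hid⟩ := vekua_key Ξ hΞo hΞ u v hu hv hCR n M N hM hN
  intro w hw
  obtain ⟨h1, h2⟩ := hid w hw
  constructor
  · rw [h1]; ring
  · rw [h2]; ring
end

section
/- Let Ξ be an open subset of the upper half-plane {(a,b) ∈ ℝ² : b > 0}, let M, N : ℝ² → ℝ be continuously differentiable on Ξ, let t ∈ ℝ^p be a fixed unit vector, and let P_ℓ : ℝ^q → Cl_m be a homogeneous monogenic polynomial of degree ℓ. Define f on Ω = {(x,y) ∈ ℝ^p ⊕ ℝ^q : (⟨x,t⟩,|y|) ∈ Ξ} by f(x,y) = (M(θ,ρ) - t·ν·N(θ,ρ))·P_ℓ(y), with θ = ⟨x,t⟩, ρ = |y|, ν = ι(y)/|y|. If (⟨t,∂_x⟩ - t·∂_y) f = 0 on Ω, then f is monogenic on Ω, i.e. (∂_x + ∂_y) f = 0 on Ω. -/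
/-! The function `f` depends on `x` only through `θ = ⟨x,t⟩`, so `∂_{x_j} f = t_j ∂_θ f` for every
`j`. Since `|t| = 1` this gives `⟨t,∂_x⟩ f = ∂_θ f` and `∂_x f = t ∂_θ f = t ⟨t,∂_x⟩ f`. The null
condition says `⟨t,∂_x⟩ f = t ∂_y f`, hence `∂_x f = t² ∂_y f = -∂_y f`. -/

section ridge
variable {p q : ℕ}

lemma sum_update_mul (x t : Fin p → ℝ) (j : Fin p) (s : ℝ) :
    ∑ k, Function.update x j s k * t k = t j * s + ∑ k ∈ Finset.univ.erase j, x k * t k := by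
  rw [← Finset.add_sum_erase _ _ (Finset.mem_univ j), Function.update_self, mul_comm]
  congr 1
  refine Finset.sum_congr rfl fun k hk => ?_
  rw [Function.update_of_ne (Finset.ne_of_mem_erase hk)]

lemma pdx_ridge (t : Fin p → ℝ) (h : (Fin q → ℝ) → ℝ → ℝ) (j : Fin p) (z : Zb p q) :
    pdx j (fun w => h w.2 (∑ k, w.1 k * t k)) z = t j * deriv (h z.2) (∑ k, z.1 k * t k) := by
  set c := ∑ k ∈ Finset.univ.erase j, z.1 k * t k
  have hθ : ∑ k, z.1 k * t k = t j * z.1 j + c := by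
    have := sum_update_mul z.1 t j (z.1 j)
    rwa [Function.update_eq_self] at this
  simp only [pdx, sum_update_mul, hθ]
  rw [deriv_comp_mul_left (t j) (fun u => h z.2 (u + c)), deriv_comp_add_const, smul_eq_mul]

lemma pdxC_ridge (b : Module.Basis (Finset (Fin (p+q))) ℝ (Cl (p+q))) (t : Fin p → ℝ)
    (F : (Fin q → ℝ) → ℝ → Cl (p+q)) (j : Fin p) (z : Zb p q) :
    pdxC b j (fun w => F w.2 (∑ k, w.1 k * t k)) z =
      t j • ∑ A, deriv (fun s => b.repr (F z.2 s) A) (∑ k, z.1 k * t k) • b A := by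
  simp only [pdxC, Finset.smul_sum, smul_smul]
  exact Finset.sum_congr rfl fun A _ => by rw [pdx_ridge t (fun y s => b.repr (F y s) A)]

lemma clv_embX (t : Fin p → ℝ) :
    clv (embX t : Fin (p+q) → ℝ) = ∑ j : Fin p, t j • gen (p+q) (Fin.castAdd q j) := by
  have hsplit : (embX t : Fin (p+q) → ℝ) = ∑ j, t j • Pi.single (Fin.castAdd q j) 1 := by
    ext i
    simp only [Finset.sum_apply, Pi.smul_apply, Pi.single_apply, smul_eq_mul, mul_ite, mul_one,
      mul_zero]
    cases i using Fin.addCases with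
    | left i => simp [embX, Fin.castAdd_inj]
    | right i =>
      simp only [embX, Fin.append_right, Pi.zero_apply, Fin.ext_iff, Fin.val_natAdd,
        Fin.val_castAdd]
      exact (Finset.sum_eq_zero fun k _ => if_neg (by omega)).symm
  simp only [hsplit, clv, gen, map_sum, map_smul]

lemma clv_mul_self {m : ℕ} (v : Fin m → ℝ) :
    clv v * clv v = algebraMap ℝ (Cl m) (-∑ i, v i ^ 2) := by
  rw [clv, CliffordAlgebra.ι_sq_scalar]
  simp only [Qf, QuadraticMap.weightedSumSquares_apply, smul_eq_mul, neg_one_mul,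
    Finset.sum_neg_distrib, sq]
  rfl

lemma clv_embX_mul_self (t : Fin p → ℝ) (ht : ∑ j : Fin p, t j ^ 2 = 1) :
    clv (embX t : Fin (p+q) → ℝ) * clv (embX t) = -1 := by
  rw [clv_mul_self, Fin.sum_univ_add]
  simp [embX, ht]

lemma diracX_eq_clv_mul_dirT (b : Module.Basis (Finset (Fin (p+q))) ℝ (Cl (p+q)))
    (t : Fin p → ℝ) (ht : ∑ j : Fin p, t j ^ 2 = 1) (f : Zb p q → Cl (p+q)) (z : Zb p q)
    (G : Cl (p+q)) (hG : ∀ j, pdxC b j f z = t j • G) :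
    diracX b f z = clv (embX t) * dirT t b f z := by
  have hdirT : dirT t b f z = G := by
    simp only [dirT, hG, smul_smul, ← sq, ← Finset.sum_smul, ht, one_smul]
  simp only [hdirT, diracX, hG, clv_embX, Finset.sum_mul, mul_smul_comm, smul_mul_assoc]

end ridge

theorem axial_null_solution_monogenic_general (p q : ℕ)
    (b : Module.Basis (Finset (Fin (p+q))) ℝ (Cl (p+q)))
    (Ξ : Set (ℝ × ℝ))
    (M N : ℝ × ℝ → ℝ)
    (t : Fin p → ℝ) (ht : ∑ j : Fin p, t j ^ 2 = 1)
    (P : (Fin q → ℝ) → Cl (p+q))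
    (f : Zb p q → Cl (p+q))
    (hf : f = fun z => M (∑ j : Fin p, z.1 j * t j, rnorm z.2) • P z.2 -
      ((rnorm z.2)⁻¹ * N (∑ j : Fin p, z.1 j * t j, rnorm z.2)) •
        (clv (embX t) * clv (embY z.2) * P z.2))
    (hnull : ∀ z : Zb p q, (∑ j : Fin p, z.1 j * t j, rnorm z.2) ∈ Ξ →
      dirT t b f z - clv (embX t) * diracY b f z = 0) :
    ∀ z : Zb p q, (∑ j : Fin p, z.1 j * t j, rnorm z.2) ∈ Ξ →
      diracX b f z + diracY b f z = 0 := by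
  intro z hz
  have hdiracX : diracX b f z = clv (embX t) * dirT t b f z := by
    subst hf
    exact diracX_eq_clv_mul_dirT b t ht _ z _ fun j => pdxC_ridge b t
      (fun y s => M (s, rnorm y) • P y -
        ((rnorm y)⁻¹ * N (s, rnorm y)) • (clv (embX t) * clv (embY y) * P y)) j z
  rw [hdiracX, sub_eq_zero.mp (hnull z hz), ← mul_assoc, clv_embX_mul_self t ht, neg_one_mul,
    neg_add_cancel]

/-- an axial null solution of `⟨t,∂_x⟩ - t∂_y` is monogenic. -/
theorem axial_null_solution_monogenic (p q ℓ : ℕ) (hp : 1 ≤ p) (hq : 1 ≤ q)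
    (b : Module.Basis (Finset (Fin (p+q))) ℝ (Cl (p+q))) (hb : ∀ A, b A = eProd (p+q) A)
    (Ξ : Set (ℝ × ℝ)) (hΞo : IsOpen Ξ) (hΞ : Ξ ⊆ UHP)
    (M N : ℝ × ℝ → ℝ) (hM : ContDiffOn ℝ 1 M Ξ) (hN : ContDiffOn ℝ 1 N Ξ)
    (t : Fin p → ℝ) (ht : ∑ j : Fin p, t j ^ 2 = 1)
    (P : (Fin q → ℝ) → Cl (p+q)) (hP : IsHomPoly b ℓ P) (hPmono : MonoY b P)
    (f : Zb p q → Cl (p+q))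
    (hf : f = fun z => M (∑ j : Fin p, z.1 j * t j, rnorm z.2) • P z.2 -
      ((rnorm z.2)⁻¹ * N (∑ j : Fin p, z.1 j * t j, rnorm z.2)) •
        (clv (embX t) * clv (embY z.2) * P z.2))
    (hnull : ∀ z : Zb p q, (∑ j : Fin p, z.1 j * t j, rnorm z.2) ∈ Ξ →
      dirT t b f z - clv (embX t) * diracY b f z = 0) :
    ∀ z : Zb p q, (∑ j : Fin p, z.1 j * t j, rnorm z.2) ∈ Ξ →
      diracX b f z + diracY b f z = 0 :=
  axial_null_solution_monogenic_general p q b Ξ M N t ht P f hf hnull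
end
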